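/- For every finite simple graph G, the edge chromatic number χ'(G) satisfies Δ(G) ≤ χ'(G) ≤ Δ(G) + 1, where Δ(G) is the maximum vertex degree of G. -/

import Mathlib

open SimpleGraph

variable {V : Type*}

/-- `c` is a proper edge coloring of `G` using colors `0, …, n-1`:
every edge gets a color `< n`, and distinct edges sharing an endpoint
receive distinct colors. -/
def IsProperEdgeColoring (G : SimpleGraph V) (n : ℕ) (c : Sym2 V → ℕ) : Prop :=
  (∀ e ∈ G.edgeSet, c e < n) ∧
    ∀ e₁ ∈ G.edgeSet, ∀ e₂ ∈ G.edgeSet, e₁ ≠ e₂ → (∃ v, v ∈ e₁ ∧ v ∈ e₂) →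
      c e₁ ≠ c e₂

/-- The edge chromatic number `χ'(G)`: the least number of colors in a proper
edge coloring of `G`. -/
noncomputable def edgeChromaticNumber (G : SimpleGraph V) : ℕ :=
  sInf {n | ∃ c, IsProperEdgeColoring G n c}

/-- The degree `d_G(v)` of a vertex. -/
noncomputable def deg (G : SimpleGraph V) (v : V) : ℕ := (G.neighborSet v).ncard

/-- The maximum vertex degree `Δ(G)`. -/
noncomputable def maxDeg (G : SimpleGraph V) : ℕ := sSup {d | ∃ v, deg G v = d}

/-- `G` is critical: it is class 2 (i.e. `χ'(G) ≠ Δ(G)`) and every proper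
subgraph `H` of `G` satisfies `χ'(H) < χ'(G)`. -/
def IsCritical (G : SimpleGraph V) : Prop :=
  edgeChromaticNumber G ≠ maxDeg G ∧
    ∀ H : G.Subgraph, H ≠ ⊤ → edgeChromaticNumber H.coe < edgeChromaticNumber G

/-- `G` is `k`-critical: critical with maximum degree `k`. -/
def IsKCritical (G : SimpleGraph V) (k : ℕ) : Prop :=
  IsCritical G ∧ maxDeg G = k

/-! Lower bound: the edges at a vertex get distinct colours. Upper bound: colour the edges one at
a time with `Δ + 1` colours, so that every vertex always misses some colour. To colour a new edge
`u v`, take a maximal fan `v = f 0, …, f s` at `u` and a colour `β` missing at `f s`. If `β` is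
also missing at `u`, shift the colours down the fan. Otherwise `β` sits on a fan edge
`u (f (j + 1))`, hence is missing at `f j`. For `α` missing at `u`, the `α`/`β` Kempe graph has
maximum degree two and `u`, `f j`, `f s` have degree at most one in it, so one of `f j`, `f s` is
not connected to `u`. Swapping `α` and `β` on its component makes `α` missing there while keeping
the fan up to it, and shifting that fan finishes. -/

namespace SimpleGraph

variable {K : SimpleGraph V}

theorem Walk.IsPath.eq_or_eq_of_subsingleton_neighborSet {x z a : V} {q : K.Walk x z}
    (hq : q.IsPath) (ha : a ∈ q.support) (hsub : (K.neighborSet a).Subsingleton) :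
    a = x ∨ a = z := by
  induction q with
  | nil => simpa using ha
  | @cons x y z hxy q ih =>
    rw [Walk.cons_isPath_iff] at hq
    rcases List.mem_cons.mp (Walk.support_cons hxy q ▸ ha) with rfl | ha
    · exact .inl rfl
    rcases ih hq.1 ha with rfl | rfl
    · cases q with
      | nil => exact .inr rfl
      | cons hyw q =>
        obtain rfl := hsub hxy.symm hyw
        exact absurd (by simp) hq.2
    · exact .inr rfl

theorem Walk.IsPath.support_subset_or_support_subset
    (h2 : ∀ w a b d, K.Adj w a → K.Adj w b → K.Adj w d → a = b ∨ a = d ∨ b = d)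
    {x y z : V} {p : K.Walk x y} {q : K.Walk x z} (hp : p.IsPath) (hq : q.IsPath)
    (hx : ∀ a ∈ p.support, ∀ b ∈ q.support, K.Adj x a → K.Adj x b → a = b) :
    p.support ⊆ q.support ∨ q.support ⊆ p.support := by
  induction p with
  | nil => exact .inl (by simp)
  | @cons x v y hxv p ih =>
    cases q with
    | nil => exact .inr (by simp)
    | @cons _ v' _ hxv' q =>
      obtain rfl : v = v' := hx v (by simp) v' (by simp) hxv hxv'
      rw [Walk.cons_isPath_iff] at hp hq
      have hv : ∀ a ∈ p.support, ∀ b ∈ q.support, K.Adj v a → K.Adj v b → a = b := by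
        intro a ha b hb hva hvb
        rcases h2 v a b x hva hvb hxv.symm with h | rfl | rfl
        · exact h
        · exact absurd ha hp.2
        · exact absurd hb hq.2
      simp only [Walk.support_cons]
      exact (ih hp.1 hq.1 hv).imp (List.cons_subset_cons x) (List.cons_subset_cons x)

theorem Reachable.not_reachable_of_subsingleton_neighborSet
    (h2 : ∀ w a b d, K.Adj w a → K.Adj w b → K.Adj w d → a = b ∨ a = d ∨ b = d)
    {u a b : V} (hu : (K.neighborSet u).Subsingleton) (ha : (K.neighborSet a).Subsingleton)
    (hb : (K.neighborSet b).Subsingleton) (hua : u ≠ a) (hub : u ≠ b) (hab : a ≠ b)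
    (hra : K.Reachable u a) : ¬K.Reachable u b := by
  intro hrb
  obtain ⟨p, hp⟩ := hra.exists_isPath
  obtain ⟨q, hq⟩ := hrb.exists_isPath
  rcases hp.support_subset_or_support_subset h2 hq fun a _ b _ ha hb => hu ha hb with h | h
  · have := hq.eq_or_eq_of_subsingleton_neighborSet (h p.end_mem_support) ha
    tauto
  · have := hp.eq_or_eq_of_subsingleton_neighborSet (h q.end_mem_support) hb
    tauto

end SimpleGraph

open Function

open scoped Classical

def IsProperEdgeColoringOn (E : Set (Sym2 V)) (n : ℕ) (c : Sym2 V → ℕ) : Prop :=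
  (∀ e ∈ E, c e < n) ∧
    ∀ e₁ ∈ E, ∀ e₂ ∈ E, e₁ ≠ e₂ → (∃ v, v ∈ e₁ ∧ v ∈ e₂) → c e₁ ≠ c e₂

def IsMissingColor (E : Set (Sym2 V)) (c : Sym2 V → ℕ) (a : ℕ) (x : V) : Prop :=
  ∀ e ∈ E, x ∈ e → c e ≠ a

section Coloring

variable {E : Set (Sym2 V)} {n : ℕ} {c : Sym2 V → ℕ}

theorem IsProperEdgeColoringOn.apply_ne (hc : IsProperEdgeColoringOn E n c) {u a b : V}
    (ha : s(u, a) ∈ E) (hb : s(u, b) ∈ E) (hab : a ≠ b) : c s(u, a) ≠ c s(u, b) :=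
  hc.2 _ ha _ hb (mt Sym2.congr_right.mp hab) ⟨u, by simp, by simp⟩

theorem exists_isMissingColor [Finite V] {G : SimpleGraph V} (hE : E ⊆ G.edgeSet)
    (c : Sym2 V → ℕ) {x : V} (hx : deg G x < n) : ∃ a < n, IsMissingColor E c a x := by
  set used := (fun w => c s(x, w)) '' G.neighborSet x
  have hused : used.ncard < n := (Set.ncard_image_le).trans_lt hx
  obtain ⟨a, ha, haused⟩ : ∃ a < n, a ∉ used := by
    by_contra! h
    have := Set.ncard_le_ncard (s := Set.Iio n) fun a ha => h a ha
    rw [Set.ncard_Iio_nat] at this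
    omega
  refine ⟨a, ha, fun e he hxe hea => haused ?_⟩
  obtain ⟨w, rfl⟩ := Sym2.mem_iff_exists.mp hxe
  exact ⟨w, hE he, hea⟩

theorem IsProperEdgeColoringOn.update_of_isMissingColor (hc : IsProperEdgeColoringOn E n c)
    {u v : V} {γ : ℕ} (hγ : γ < n) (hu : IsMissingColor E c γ u) (hv : IsMissingColor E c γ v) :
    IsProperEdgeColoringOn (insert s(u, v) E) n (update c s(u, v) γ) := by
  have hnew : ∀ e ∈ E, e ≠ s(u, v) → (∃ w, w ∈ s(u, v) ∧ w ∈ e) →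
      update c s(u, v) γ s(u, v) ≠ update c s(u, v) γ e := by
    rintro e he hne ⟨w, hw, hwe⟩
    rw [update_self, update_of_ne hne]
    rcases Sym2.mem_iff.mp hw with rfl | rfl
    · exact (hu e he hwe).symm
    · exact (hv e he hwe).symm
  refine ⟨fun e he => ?_, fun e₁ he₁ e₂ he₂ hne hshare => ?_⟩
  · by_cases h : e = s(u, v)
    · simpa [h] using hγ
    · simpa [h] using hc.1 e (he.resolve_left h)
  rcases eq_or_ne e₁ s(u, v) with rfl | h₁
  · exact hnew e₂ (he₂.resolve_left hne.symm) hne.symm hshare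
  rcases eq_or_ne e₂ s(u, v) with rfl | h₂
  · obtain ⟨w, hw₁, hw₂⟩ := hshare
    exact (hnew e₁ (he₁.resolve_left h₁) h₁ ⟨w, hw₂, hw₁⟩).symm
  rw [update_of_ne h₁, update_of_ne h₂]
  exact hc.2 e₁ (he₁.resolve_left h₁) e₂ (he₂.resolve_left h₂) hne hshare

theorem IsMissingColor.update_of_notMem {a γ : ℕ} {x : V} {e : Sym2 V}
    (h : IsMissingColor E c a x) (hx : x ∉ e) : IsMissingColor E (update c e γ) a x := by
  intro e' he' hxe'
  rw [update_of_ne (ne_of_mem_of_not_mem' hxe' hx)]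
  exact h e' he' hxe'

theorem IsProperEdgeColoringOn.isMissingColor_update_self (hc : IsProperEdgeColoringOn E n c)
    {e : Sym2 V} {u : V} {γ : ℕ} (he : e ∈ E) (hu : u ∈ e) (hγ : γ ≠ c e) :
    IsMissingColor E (update c e γ) (c e) u := by
  intro e' he' hue'
  rcases eq_or_ne e' e with rfl | hne
  · simpa using hγ
  · rw [update_of_ne hne]
    exact hc.2 e' he' e he hne ⟨u, hue', hu⟩

end Coloring

section Kempe

variable {E : Set (Sym2 V)} {n : ℕ} {c : Sym2 V → ℕ} {α β : ℕ} {x : V}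

def kempeGraph (E : Set (Sym2 V)) (c : Sym2 V → ℕ) (α β : ℕ) : SimpleGraph V :=
  SimpleGraph.fromEdgeSet {e ∈ E | c e = α ∨ c e = β}

/-- Interchanges `α` and `β` on the `α`/`β` Kempe chain through `x`. The swap is applied to every
edge touching the chain, which is harmless since it fixes all other colours. -/
noncomputable def kempeSwap (E : Set (Sym2 V)) (c : Sym2 V → ℕ) (α β : ℕ) (x : V)
    (e : Sym2 V) : ℕ :=
  if ∃ w ∈ e, (kempeGraph E c α β).Reachable x w then Equiv.swap α β (c e) else c e

theorem kempeGraph_reachable_of_mem {e : Sym2 V} (he : e ∈ E) (hce : c e = α ∨ c e = β)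
    {w₁ w₂ : V} (hw₁ : w₁ ∈ e) (hw₂ : w₂ ∈ e) (hr : (kempeGraph E c α β).Reachable x w₁) :
    (kempeGraph E c α β).Reachable x w₂ := by
  rcases eq_or_ne w₁ w₂ with rfl | hne
  · exact hr
  obtain rfl := (Sym2.mem_and_mem_iff hne).mp ⟨hw₁, hw₂⟩
  exact hr.trans (show (kempeGraph E c α β).Adj w₁ w₂ from ⟨⟨he, hce⟩, hne⟩).reachable

theorem kempeSwap_of_reachable {e : Sym2 V} {w : V} (hw : w ∈ e)
    (hr : (kempeGraph E c α β).Reachable x w) :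
    kempeSwap E c α β x e = Equiv.swap α β (c e) :=
  if_pos ⟨w, hw, hr⟩

theorem kempeSwap_of_not_reachable {e : Sym2 V} (he : e ∈ E) {w : V} (hw : w ∈ e)
    (hr : ¬(kempeGraph E c α β).Reachable x w) : kempeSwap E c α β x e = c e := by
  unfold kempeSwap
  split_ifs with h
  · obtain ⟨w', hw', hr'⟩ := h
    by_cases hce : c e = α ∨ c e = β
    · exact absurd (kempeGraph_reachable_of_mem he hce hw' hw hr') hr
    · push Not at hce
      exact Equiv.swap_apply_of_ne_of_ne hce.1 hce.2
  · rfl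

theorem IsProperEdgeColoringOn.kempeSwap (hc : IsProperEdgeColoringOn E n c) (hα : α < n)
    (hβ : β < n) : IsProperEdgeColoringOn E n (kempeSwap E c α β x) := by
  refine ⟨fun e he => ?_, fun e₁ he₁ e₂ he₂ hne ⟨v, hv₁, hv₂⟩ => ?_⟩
  · unfold _root_.kempeSwap
    split_ifs
    · rw [Equiv.swap_apply_def]
      split_ifs <;> first | exact hα | exact hβ | exact hc.1 e he
    · exact hc.1 e he
  have hne' := hc.2 e₁ he₁ e₂ he₂ hne ⟨v, hv₁, hv₂⟩
  by_cases hr : (kempeGraph E c α β).Reachable x v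
  · rw [kempeSwap_of_reachable hv₁ hr, kempeSwap_of_reachable hv₂ hr]
    exact (Equiv.injective _).ne hne'
  · rwa [kempeSwap_of_not_reachable he₁ hv₁ hr, kempeSwap_of_not_reachable he₂ hv₂ hr]

theorem IsMissingColor.kempeSwap_of_not_reachable {a : ℕ} {y : V} (h : IsMissingColor E c a y)
    (hy : ¬(kempeGraph E c α β).Reachable x y) :
    IsMissingColor E (kempeSwap E c α β x) a y := by
  intro e he hye
  rw [_root_.kempeSwap_of_not_reachable he hye hy]
  exact h e he hye

theorem IsMissingColor.kempeSwap_of_reachable {a : ℕ} {y : V} (h : IsMissingColor E c a y)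
    (hy : (kempeGraph E c α β).Reachable x y) :
    IsMissingColor E (kempeSwap E c α β x) (Equiv.swap α β a) y := by
  intro e he hye
  rw [_root_.kempeSwap_of_reachable hye hy, (Equiv.injective _).ne_iff]
  exact h e he hye

theorem IsMissingColor.kempeSwap_self (h : IsMissingColor E c β x) :
    IsMissingColor E (kempeSwap E c α β x) α x := by
  simpa using h.kempeSwap_of_reachable (α := α) (β := β) (SimpleGraph.Reachable.refl x)

theorem IsMissingColor.kempeSwap_of_ne {a : ℕ} {y : V} (h : IsMissingColor E c a y)
    (hα : a ≠ α) (hβ : a ≠ β) : IsMissingColor E (kempeSwap E c α β x) a y := by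
  by_cases hy : (kempeGraph E c α β).Reachable x y
  · simpa [Equiv.swap_apply_of_ne_of_ne hα hβ] using h.kempeSwap_of_reachable hy
  · exact h.kempeSwap_of_not_reachable hy

theorem IsProperEdgeColoringOn.kempeGraph_adj_pigeonhole (hc : IsProperEdgeColoringOn E n c)
    {w a b d : V} (ha : (kempeGraph E c α β).Adj w a) (hb : (kempeGraph E c α β).Adj w b)
    (hd : (kempeGraph E c α β).Adj w d) : a = b ∨ a = d ∨ b = d := by
  obtain ⟨⟨ha, hca⟩, -⟩ := ha
  obtain ⟨⟨hb, hcb⟩, -⟩ := hb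
  obtain ⟨⟨hd, hcd⟩, -⟩ := hd
  by_contra! h
  have := hc.apply_ne ha hb h.1
  have := hc.apply_ne ha hd h.2.1
  have := hc.apply_ne hb hd h.2.2
  omega

theorem IsProperEdgeColoringOn.subsingleton_neighborSet_kempeGraph
    (hc : IsProperEdgeColoringOn E n c) {γ : ℕ} (hγ : γ = α ∨ γ = β) {y : V}
    (h : IsMissingColor E c γ y) : ((kempeGraph E c α β).neighborSet y).Subsingleton := by
  rintro a ⟨⟨ha, hca⟩, -⟩ b ⟨⟨hb, hcb⟩, -⟩
  by_contra hab
  have := hc.apply_ne ha hb hab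
  have := h _ ha (by simp)
  have := h _ hb (by simp)
  omega

end Kempe

section Fan

variable {E : Set (Sym2 V)} {n : ℕ} {c : Sym2 V → ℕ} {u : V} {f : ℕ → V} {s t : ℕ}

/-- A Vizing fan at `u` on the distinct neighbours `f 0, …, f s`: the edges `u (f i)` with
`i ≥ 1` are coloured, and the colour of `u (f (i + 1))` is missing at `f i`. The edge `u (f 0)` is
the one to be coloured. -/
structure IsFan (E : Set (Sym2 V)) (c : Sym2 V → ℕ) (u : V) (f : ℕ → V) (s : ℕ) : Prop where
  injOn : Set.InjOn f (Set.Iic s)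
  ne_center : ∀ i ≤ s, f i ≠ u
  mem : ∀ i ≤ s, 0 < i → s(u, f i) ∈ E
  isMissingColor : ∀ i < s, IsMissingColor E c (c s(u, f (i + 1))) (f i)

theorem isFan_zero {v : V} (hv : v ≠ u) : IsFan E c u (fun _ => v) 0 where
  injOn i hi j hj _ := by simp only [Set.mem_Iic, Nat.le_zero] at hi hj; omega
  ne_center _ _ := hv
  mem i hi hi' := absurd hi (by omega)
  isMissingColor i hi := absurd hi (by omega)

theorem IsFan.mono (hf : IsFan E c u f s) (hts : t ≤ s) : IsFan E c u f t where
  injOn := hf.injOn.mono (Set.Iic_subset_Iic.mpr hts)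
  ne_center i hi := hf.ne_center i (hi.trans hts)
  mem i hi := hf.mem i (hi.trans hts)
  isMissingColor i hi := hf.isMissingColor i (hi.trans_le hts)

theorem IsFan.snoc (hf : IsFan E c u f s) {w : V} (hw : s(u, w) ∈ E) (hwu : w ≠ u)
    (hwf : ∀ i ≤ s, f i ≠ w) (hmiss : IsMissingColor E c (c s(u, w)) (f s)) :
    IsFan E c u (update f (s + 1) w) (s + 1) := by
  have hf' : ∀ i ≤ s, update f (s + 1) w i = f i := fun i hi => update_of_ne (by omega) _ _
  refine ⟨fun i hi j hj hij => ?_, fun i hi => ?_, fun i hi hi0 => ?_, fun i hi => ?_⟩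
  · simp only [Set.mem_Iic] at hi hj
    rcases hi.lt_or_eq with hi | rfl <;> rcases hj.lt_or_eq with hj | rfl
    · rw [hf' i (by omega), hf' j (by omega)] at hij
      exact hf.injOn (Set.mem_Iic.mpr (by omega)) (Set.mem_Iic.mpr (by omega)) hij
    · rw [hf' i (by omega), update_self] at hij
      exact absurd hij (hwf i (by omega))
    · rw [hf' j (by omega), update_self] at hij
      exact absurd hij.symm (hwf j (by omega))
    · rfl
  · rcases hi.lt_or_eq with hi | rfl
    · rw [hf' i (by omega)]
      exact hf.ne_center i (by omega)
    · rwa [update_self]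
  · rcases hi.lt_or_eq with hi | rfl
    · rw [hf' i (by omega)]
      exact hf.mem i (by omega) hi0
    · rwa [update_self]
  · rcases (Nat.lt_succ_iff.mp hi).lt_or_eq with hi | rfl
    · rw [hf' i (by omega), hf' (i + 1) (by omega)]
      exact hf.isMissingColor i hi
    · rwa [hf' i le_rfl, update_self]

theorem IsFan.lt_card [Finite V] (hf : IsFan E c u f s) : s < Nat.card V := by
  have hinj : Injective fun i : Fin (s + 1) => f i := fun i j hij =>
    Fin.ext (hf.injOn (Set.mem_Iic.mpr (by omega)) (Set.mem_Iic.mpr (by omega)) hij)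
  simpa using Nat.card_le_card_of_injective _ hinj

theorem exists_maximal_isFan [Finite V] {v : V} (hv : v ≠ u) :
    ∃ f s, f 0 = v ∧ IsFan E c u f s ∧ ∀ w, s(u, w) ∈ E → w ≠ u →
      IsMissingColor E c (c s(u, w)) (f s) → ∃ i ≤ s, f i = w := by
  set S := {s | ∃ f : ℕ → V, f 0 = v ∧ IsFan E c u f s}
  have hbdd : BddAbove S := ⟨Nat.card V, fun s ⟨_, _, hf⟩ => hf.lt_card.le⟩
  obtain ⟨f, hf0, hf⟩ := Nat.sSup_mem (s := S) ⟨0, _, rfl, isFan_zero hv⟩ hbdd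
  refine ⟨f, sSup S, hf0, hf, fun w hw hwu hmiss => ?_⟩
  by_contra! hwf
  have hext : ∃ f' : ℕ → V, f' 0 = v ∧ IsFan E c u f' (sSup S + 1) :=
    ⟨_, by simp [hf0], hf.snoc hw hwu hwf hmiss⟩
  have := le_csSup hbdd hext
  omega

theorem IsFan.update_of_notMem (hf : IsFan E c u f t) {e : Sym2 V} {γ : ℕ} (he : ∀ i ≤ t, f i ∉ e) :
    IsFan E (update c e γ) u f t where
  __ := hf
  isMissingColor i hi := by
    have hne : s(u, f (i + 1)) ≠ e := ne_of_mem_of_not_mem' (by simp) (he (i + 1) hi)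
    rw [update_of_ne hne]
    exact (hf.isMissingColor i hi).update_of_notMem (he i hi.le)

theorem IsFan.exists_isProperEdgeColoringOn_insert (hc : IsProperEdgeColoringOn E n c)
    (hf : IsFan E c u f t) {γ : ℕ} (hγ : γ < n) (hu : IsMissingColor E c γ u)
    (ht : IsMissingColor E c γ (f t)) :
    ∃ c', IsProperEdgeColoringOn (insert s(u, f 0) E) n c' := by
  induction t generalizing c γ with
  | zero => exact ⟨_, hc.update_of_isMissingColor hγ hu ht⟩
  | succ t ih =>
    -- recolour `u (f (t + 1))` with `γ`: its old colour becomes missing at `u` and at `f t`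
    have he : s(u, f (t + 1)) ∈ E := hf.mem (t + 1) le_rfl t.succ_pos
    have hfe : ∀ i ≤ t, f i ∉ s(u, f (t + 1)) := by
      intro i hi hie
      rcases Sym2.mem_iff.mp hie with h | h
      · exact hf.ne_center i (by omega) h
      · exact absurd (hf.injOn (Set.mem_Iic.mpr (by omega)) (Set.mem_Iic.mpr le_rfl) h)
          (by omega)
    have hc' := hc.update_of_isMissingColor hγ hu ht
    rw [Set.insert_eq_of_mem he] at hc'
    exact ih hc' ((hf.mono t.le_succ).update_of_notMem hfe) (hc.1 _ he)
      (hc.isMissingColor_update_self he (by simp) (hu _ he (by simp)).symm)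
      ((hf.isMissingColor t t.lt_succ_self).update_of_notMem (hfe t le_rfl))

theorem IsFan.kempeSwap (hf : IsFan E c u f t) {x : V} {α β : ℕ}
    (hu : ¬(kempeGraph E c α β).Reachable x u) (hα : IsMissingColor E c α u)
    (hβ : ∀ i < t, c s(u, f (i + 1)) = β → ¬(kempeGraph E c α β).Reachable x (f i)) :
    IsFan E (kempeSwap E c α β x) u f t where
  __ := hf
  isMissingColor i hi := by
    have hmem := hf.mem (i + 1) hi (by omega)
    rw [kempeSwap_of_not_reachable hmem (by simp) hu]
    by_cases hiβ : c s(u, f (i + 1)) = β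
    · exact (hf.isMissingColor i hi).kempeSwap_of_not_reachable (hβ i hi hiβ)
    · exact (hf.isMissingColor i hi).kempeSwap_of_ne (hα _ hmem (by simp)) hiβ

end Fan

section Vizing

variable [Finite V] {G : SimpleGraph V} {n : ℕ}

theorem IsProperEdgeColoringOn.exists_insert {E : Set (Sym2 V)} {c : Sym2 V → ℕ}
    (hc : IsProperEdgeColoringOn E n c) (hE : E ⊆ G.edgeSet) (hdeg : ∀ x, deg G x < n)
    {u v : V} (huv : G.Adj u v) (hne : s(u, v) ∉ E) :
    ∃ c', IsProperEdgeColoringOn (insert s(u, v) E) n c' := by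
  obtain ⟨f, s, rfl, hf, hmax⟩ := exists_maximal_isFan (E := E) (c := c) huv.ne'
  have hfinj : ∀ {i j}, i ≤ s → j ≤ s → f i = f j → i = j := fun hi hj h =>
    hf.injOn (Set.mem_Iic.mpr hi) (Set.mem_Iic.mpr hj) h
  obtain ⟨β, hβn, hβ⟩ := exists_isMissingColor hE c (hdeg (f s))
  by_cases hβu : IsMissingColor E c β u
  · exact hf.exists_isProperEdgeColoringOn_insert hc hβn hβu hβ
  obtain ⟨α, hαn, hα⟩ := exists_isMissingColor hE c (hdeg u)
  obtain ⟨j, hjs, hj⟩ : ∃ j < s, c s(u, f (j + 1)) = β := by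
    simp only [IsMissingColor, not_forall, not_not] at hβu
    obtain ⟨e, he, hue, hce⟩ := hβu
    obtain ⟨w, rfl⟩ := Sym2.mem_iff_exists.mp hue
    obtain ⟨i, his, rfl⟩ := hmax w he (G.ne_of_adj (hE he)).symm (hce ▸ hβ)
    obtain ⟨j, rfl⟩ : ∃ j, i = j + 1 := Nat.exists_eq_succ_of_ne_zero (by rintro rfl; exact hne he)
    exact ⟨j, his, hce⟩
  have hβj : IsMissingColor E c β (f j) := hj ▸ hf.isMissingColor j hjs
  have hβ_unique : ∀ i < s, c s(u, f (i + 1)) = β → i = j := by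
    intro i his hi
    by_contra hij
    refine hc.apply_ne (hf.mem _ his (by omega)) (hf.mem _ hjs (by omega)) ?_ (hi.trans hj.symm)
    exact fun h => hij (by have := hfinj his hjs h; omega)
  have hleaf_u := hc.subsingleton_neighborSet_kempeGraph (β := β) (.inl rfl) hα
  have hleaf_j := hc.subsingleton_neighborSet_kempeGraph (α := α) (.inr rfl) hβj
  have hleaf_s := hc.subsingleton_neighborSet_kempeGraph (α := α) (.inr rfl) hβ
  have hswap (x : V) := hc.kempeSwap (x := x) hαn hβn
  by_cases hr : (kempeGraph E c α β).Reachable u (f j)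
  · have hrs : ¬(kempeGraph E c α β).Reachable u (f s) :=
      hr.not_reachable_of_subsingleton_neighborSet (fun _ _ _ _ => hc.kempeGraph_adj_pigeonhole)
        hleaf_u hleaf_j hleaf_s (hf.ne_center j hjs.le).symm (hf.ne_center s le_rfl).symm
        (fun h => by have := hfinj hjs.le le_rfl h; omega)
    have hsu : ¬(kempeGraph E c α β).Reachable (f s) u := fun h => hrs h.symm
    have hf' := hf.kempeSwap hsu hα fun i his hi => by
      obtain rfl := hβ_unique i his hi
      exact fun h => hrs (hr.trans h.symm)
    exact hf'.exists_isProperEdgeColoringOn_insert (hswap (f s)) hαn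
      (hα.kempeSwap_of_not_reachable hsu) hβ.kempeSwap_self
  · have hju : ¬(kempeGraph E c α β).Reachable (f j) u := fun h => hr h.symm
    have hf' := (hf.mono hjs.le).kempeSwap hju hα fun i hij hi => by
      have := hβ_unique i (by omega) hi
      omega
    exact hf'.exists_isProperEdgeColoringOn_insert (hswap (f j)) hαn
      (hα.kempeSwap_of_not_reachable hju) hβj.kempeSwap_self

theorem exists_isProperEdgeColoring (hdeg : ∀ x, deg G x < n) :
    ∃ c, IsProperEdgeColoring G n c := by
  refine Set.Finite.induction_on_subset (motive := fun E _ => ∃ c, IsProperEdgeColoringOn E n c)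
    G.edgeSet (Set.toFinite _) ⟨fun _ => 0, by simp [IsProperEdgeColoringOn]⟩ ?_
  intro e E he hE heE ⟨c, hc⟩
  induction e using Sym2.ind with
  | h u v => exact hc.exists_insert hE hdeg he heE

end Vizing

theorem IsProperEdgeColoring.deg_le {G : SimpleGraph V} {m : ℕ} {c : Sym2 V → ℕ}
    (hc : IsProperEdgeColoring G m c) (x : V) : deg G x ≤ m := by
  have hc' : IsProperEdgeColoringOn G.edgeSet m c := hc
  calc deg G x ≤ (Set.Iio m).ncard :=
        Set.ncard_le_ncard_of_injOn (fun w => c s(x, w)) (fun w hw => hc.1 _ hw)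
          fun w₁ hw₁ w₂ hw₂ h => not_not.mp fun hne => hc'.apply_ne hw₁ hw₂ hne h
    _ = m := Set.ncard_Iio_nat m

theorem maxDeg_le_of_isProperEdgeColoring {G : SimpleGraph V} {m : ℕ} {c : Sym2 V → ℕ}
    (hc : IsProperEdgeColoring G m c) : maxDeg G ≤ m :=
  csSup_le' fun _ ⟨x, hx⟩ => hx ▸ hc.deg_le x

theorem deg_le_maxDeg [Finite V] (G : SimpleGraph V) (x : V) : deg G x ≤ maxDeg G :=
  le_csSup ⟨Nat.card V, fun _ ⟨_, hy⟩ => hy ▸ Set.ncard_le_card _⟩ ⟨x, rfl⟩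

/-- Vizing's theorem: for every finite simple graph `G`,
`Δ(G) ≤ χ'(G) ≤ Δ(G) + 1`. -/
theorem vizing [Fintype V] (G : SimpleGraph V) :
    maxDeg G ≤ edgeChromaticNumber G ∧ edgeChromaticNumber G ≤ maxDeg G + 1 := by
  obtain ⟨c, hc⟩ := exists_isProperEdgeColoring fun x => Nat.lt_succ_of_le (deg_le_maxDeg G x)
  have hcol : maxDeg G + 1 ∈ {n | ∃ c, IsProperEdgeColoring G n c} := ⟨c, hc⟩
  obtain ⟨c', hc'⟩ := Nat.sInf_mem ⟨_, hcol⟩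
  exact ⟨maxDeg_le_of_isProperEdgeColoring hc', Nat.sInf_le hcol⟩
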